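/- Let A be the 3-dimensional algebra over ℂ with basis {e₁, e₂, e₃} and nonzero products e₁∘e₁ = e₂, e₁∘e₃ = e₁, e₃∘e₁ = -(1/2)e₁, e₃∘e₂ = -2e₂, e₂∘e₃ = e₂, e₃∘e₃ = e₃, and let B be the symmetric bilinear form with B(e₁,e₁) = -2s, B(e₂,e₃) = B(e₃,e₂) = s, and all other pairings zero, with s ≠ 0. Then (A,∘,B) is a quadratic Novikov algebra. -/

import Mathlib

/-!
Write `xᵢ` for the coordinate of `x` along `eᵢ` (the code indexes from `0`). In these coordinates
the product becomes the quadratic map `mulCoord` on `ℂ³` and `B` the bilinear form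
`s (x₂y₃ + x₃y₂ - 2x₁y₁)`. Both Novikov identities, the symmetry of `B` and the invariance
`B(x∘y, z) = -B(y, x∘z + z∘x)` are then polynomial identities in the nine coordinates, and pairing
`x` against `e₁, e₂, e₃` gives `-2s x₁, s x₃, s x₂`, which all vanish only for `x = 0` since `s ≠ 0`.
-/

open Module

theorem Module.Basis.eq_sum_fin_three {R M : Type*} [CommSemiring R] [AddCommMonoid M]
    [Module R M] (b : Basis (Fin 3) R M) (x : M) :
    x = b.repr x 0 • b 0 + b.repr x 1 • b 1 + b.repr x 2 • b 2 := by
  rw [← Fin.sum_univ_three (f := fun i => b.repr x i • b i), b.sum_repr]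

namespace NovikovD6

noncomputable def mulCoord (x y : Fin 3 → ℂ) : Fin 3 → ℂ :=
  ![x 0 * y 2 - x 2 * y 0 / 2, x 0 * y 0 + x 1 * y 2 - 2 * x 2 * y 1, x 2 * y 2]

def formCoord (s : ℂ) (x y : Fin 3 → ℂ) : ℂ :=
  s * (x 1 * y 2 + x 2 * y 1 - 2 * x 0 * y 0)

section Coordinates

variable (x y z : Fin 3 → ℂ) (s : ℂ)

theorem mulCoord_sub_mulCoord_comm :
    mulCoord (mulCoord x y) z - mulCoord x (mulCoord y z) =
      mulCoord (mulCoord y x) z - mulCoord y (mulCoord x z) := by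
  simp only [mulCoord, Matrix.cons_val, Matrix.cons_sub_cons, Matrix.empty_sub_empty]
  ring_nf

theorem mulCoord_right_comm : mulCoord (mulCoord x y) z = mulCoord (mulCoord x z) y := by
  simp only [mulCoord, Matrix.cons_val]
  ring_nf

theorem formCoord_comm : formCoord s x y = formCoord s y x := by
  simp only [formCoord]
  ring

theorem formCoord_mulCoord :
    formCoord s (mulCoord x y) z = -formCoord s y (mulCoord x z + mulCoord z x) := by
  simp only [formCoord, mulCoord, Matrix.cons_val, Pi.add_apply]
  ring

theorem eq_zero_of_forall_formCoord_eq_zero {s : ℂ} (hs : s ≠ 0) {x : Fin 3 → ℂ}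
    (h : ∀ y, formCoord s x y = 0) : x = 0 := by
  have h₀ := h ![1, 0, 0]
  have h₁ := h ![0, 0, 1]
  have h₂ := h ![0, 1, 0]
  simp only [formCoord, Matrix.cons_val, mul_eq_zero, hs, false_or] at h₀ h₁ h₂
  ext i
  fin_cases i <;> simp_all

end Coordinates

variable {A : Type*} [AddCommGroup A] [Module ℂ A]

structure IsMulTable (mul : A →ₗ[ℂ] A →ₗ[ℂ] A) (b : Basis (Fin 3) ℂ A) : Prop where
  m11 : mul (b 0) (b 0) = b 1
  m12 : mul (b 0) (b 1) = 0
  m13 : mul (b 0) (b 2) = b 0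
  m21 : mul (b 1) (b 0) = 0
  m22 : mul (b 1) (b 1) = 0
  m23 : mul (b 1) (b 2) = b 1
  m31 : mul (b 2) (b 0) = (-(1/2) : ℂ) • b 0
  m32 : mul (b 2) (b 1) = (-2 : ℂ) • b 1
  m33 : mul (b 2) (b 2) = b 2

structure IsGramTable (B : LinearMap.BilinForm ℂ A) (b : Basis (Fin 3) ℂ A) (s : ℂ) : Prop where
  B11 : B (b 0) (b 0) = -2 * s
  B12 : B (b 0) (b 1) = 0
  B13 : B (b 0) (b 2) = 0
  B21 : B (b 1) (b 0) = 0
  B22 : B (b 1) (b 1) = 0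
  B23 : B (b 1) (b 2) = s
  B31 : B (b 2) (b 0) = 0
  B32 : B (b 2) (b 1) = s
  B33 : B (b 2) (b 2) = 0

theorem IsMulTable.equivFun_mul {mul : A →ₗ[ℂ] A →ₗ[ℂ] A} {b : Basis (Fin 3) ℂ A}
    (h : IsMulTable mul b) (x y : A) :
    b.equivFun (mul x y) = mulCoord (b.equivFun x) (b.equivFun y) := by
  rw [← LinearEquiv.eq_symm_apply]
  conv_lhs => rw [b.eq_sum_fin_three x, b.eq_sum_fin_three y]
  simp only [map_add, map_smul, LinearMap.add_apply, LinearMap.smul_apply, smul_zero,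
    h.m11, h.m12, h.m13, h.m21, h.m22, h.m23, h.m31, h.m32, h.m33,
    Basis.equivFun_symm_apply, Basis.equivFun_apply, Fin.sum_univ_three, mulCoord,
    Matrix.cons_val]
  module

theorem IsGramTable.apply_eq_formCoord {B : LinearMap.BilinForm ℂ A} {b : Basis (Fin 3) ℂ A}
    {s : ℂ} (h : IsGramTable B b s) (x y : A) :
    B x y = formCoord s (b.equivFun x) (b.equivFun y) := by
  conv_lhs => rw [b.eq_sum_fin_three x, b.eq_sum_fin_three y]
  simp only [map_add, map_smul, LinearMap.add_apply, LinearMap.smul_apply, smul_eq_mul,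
    h.B11, h.B12, h.B13, h.B21, h.B22, h.B23, h.B31, h.B32, h.B33,
    formCoord, Basis.equivFun_apply]
  ring

end NovikovD6

open NovikovD6

theorem three_dim_D6_quadratic_novikov
    {A : Type*} [AddCommGroup A] [Module ℂ A]
    (mul : A →ₗ[ℂ] A →ₗ[ℂ] A) (B : LinearMap.BilinForm ℂ A)
    (b : Module.Basis (Fin 3) ℂ A) (s : ℂ) (hs : s ≠ 0)
    (m11 : mul (b 0) (b 0) = b 1)
    (m12 : mul (b 0) (b 1) = 0)
    (m13 : mul (b 0) (b 2) = b 0)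
    (m21 : mul (b 1) (b 0) = 0)
    (m22 : mul (b 1) (b 1) = 0)
    (m23 : mul (b 1) (b 2) = b 1)
    (m31 : mul (b 2) (b 0) = (-(1/2) : ℂ) • b 0)
    (m32 : mul (b 2) (b 1) = (-2 : ℂ) • b 1)
    (m33 : mul (b 2) (b 2) = b 2)
    (B11 : B (b 0) (b 0) = -2 * s)
    (B12 : B (b 0) (b 1) = 0) (B13 : B (b 0) (b 2) = 0)
    (B21 : B (b 1) (b 0) = 0) (B22 : B (b 1) (b 1) = 0)
    (B23 : B (b 1) (b 2) = s)
    (B31 : B (b 2) (b 0) = 0) (B32 : B (b 2) (b 1) = s)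
    (B33 : B (b 2) (b 2) = 0) :
    (∀ x y z, mul (mul x y) z - mul x (mul y z) = mul (mul y x) z - mul y (mul x z)) ∧
    (∀ x y z, mul (mul x y) z = mul (mul x z) y) ∧
    (∀ x y, B x y = B y x) ∧
    (∀ x, (∀ y, B x y = 0) → x = 0) ∧
    (∀ x y z, B (mul x y) z = -(B y (mul x z + mul z x))) := by
  have hmul := IsMulTable.equivFun_mul ⟨m11, m12, m13, m21, m22, m23, m31, m32, m33⟩
  have hB := IsGramTable.apply_eq_formCoord ⟨B11, B12, B13, B21, B22, B23, B31, B32, B33⟩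
  refine ⟨fun x y z => ?_, fun x y z => ?_, fun x y => ?_, fun x hx => ?_, fun x y z => ?_⟩
  · apply b.equivFun.injective
    simpa only [map_sub, hmul] using mulCoord_sub_mulCoord_comm _ _ _
  · apply b.equivFun.injective
    simpa only [hmul] using mulCoord_right_comm _ _ _
  · simpa only [hB] using formCoord_comm _ _ s
  · refine b.equivFun.map_eq_zero_iff.mp (eq_zero_of_forall_formCoord_eq_zero hs fun v => ?_)
    simpa only [hB, LinearEquiv.apply_symm_apply] using hx (b.equivFun.symm v)
  · simpa only [hB, hmul, map_add] using formCoord_mulCoord _ _ _ s
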